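/- arXiv:1607.06554 — 6 statements merged into one kernel-verified Lean document; each statement's English description precedes it below -/
import Mathlib

section
/- Let c < d be real numbers and α > 0. Let K be the set of all functions u : ℝ → ℝ such that u(c) = u(d) = 0, u is α-Lipschitz on [c,d] (i.e. |u(y₁) − u(y₂)| ≤ α|y₁ − y₂| for all y₁, y₂ ∈ [c,d]), u(y) ≥ 0 for all y ∈ [c,d], and ∫_c^d u(y) dy = 1. If K is nonempty, then the functional u ↦ ∫_c^d y·u(y) dy attains both its maximum and its minimum over K; that is, there exist u₊, u₋ ∈ K such that for every u ∈ K, ∫_c^d y·u₋(y) dy ≤ ∫_c^d y·u(y) dy ≤ ∫_c^d y·u₊(y) dy. -/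
open MeasureTheory Set

theorem stmt_0 (c d α : ℝ) (hcd : c < d) (hα : 0 < α)
    (K : Set (ℝ → ℝ))
    (hK : K = {u : ℝ → ℝ | u c = 0 ∧ u d = 0 ∧
      (∀ y₁ ∈ Icc c d, ∀ y₂ ∈ Icc c d, |u y₁ - u y₂| ≤ α * |y₁ - y₂|) ∧
      (∀ y ∈ Icc c d, 0 ≤ u y) ∧
      (∫ y in c..d, u y) = 1})
    (hne : K.Nonempty) :
    ∃ uplus ∈ K, ∃ uminus ∈ K, ∀ u ∈ K,
      (∫ y in c..d, y * uminus y) ≤ (∫ y in c..d, y * u y) ∧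
      (∫ y in c..d, y * u y) ≤ (∫ y in c..d, y * uplus y) := by
  have hle : c ≤ d := hcd.le
  set X := Icc c d with hX
  have hcX : c ∈ X := ⟨le_refl c, hle⟩
  have hdX : d ∈ X := ⟨hle, le_refl d⟩
  -- extension operator
  let E : C(X, ℝ) → ℝ → ℝ := fun f => IccExtend hle f
  have hEcont : ∀ f : C(X, ℝ), Continuous (E f) := fun f => f.continuous.Icc_extend'
  have hEmem : ∀ (f : C(X, ℝ)) {y} (hy : y ∈ X), E f y = f ⟨y, hy⟩ := fun f y hy =>
    IccExtend_of_mem hle f hy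
  have hInt : ∀ (f : C(X, ℝ)) (g : ℝ → ℝ), Continuous g →
      IntervalIntegrable (fun y => g y * E f y) volume c d := fun f g hg =>
    (hg.mul (hEcont f)).intervalIntegrable c d
  -- the two integral functionals
  let I : C(X, ℝ) → ℝ := fun f => ∫ y in c..d, E f y
  let J : C(X, ℝ) → ℝ := fun f => ∫ y in c..d, y * E f y
  -- continuity of such functionals
  have key : ∀ (g : ℝ → ℝ) (M : ℝ), Continuous g → 0 ≤ M → (∀ y ∈ Icc c d, |g y| ≤ M) →
      Continuous (fun f : C(X, ℝ) => ∫ y in c..d, g y * E f y) := by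
    intro g M hg hM hgb
    have hC : (0:ℝ) ≤ M * (d - c) := by nlinarith
    apply LipschitzWith.continuous (K := (M * (d - c)).toNNReal)
    apply LipschitzWith.of_dist_le_mul
    intro f₁ f₂
    rw [Real.coe_toNNReal _ hC, Real.dist_eq]
    have hsub : (∫ y in c..d, g y * E f₁ y) - (∫ y in c..d, g y * E f₂ y)
        = ∫ y in c..d, (g y * E f₁ y - g y * E f₂ y) :=
      (intervalIntegral.integral_sub (hInt f₁ g hg) (hInt f₂ g hg)).symm
    rw [hsub]
    have hb : ∀ y ∈ Set.uIoc c d,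
        ‖g y * E f₁ y - g y * E f₂ y‖ ≤ M * dist f₁ f₂ := by
      intro y hy
      rw [Set.uIoc_of_le hle] at hy
      have hyX : y ∈ X := ⟨hy.1.le, hy.2⟩
      rw [hEmem f₁ hyX, hEmem f₂ hyX]
      have h1 : |g y| ≤ M := hgb y hyX
      have h2 : |f₁ ⟨y, hyX⟩ - f₂ ⟨y, hyX⟩| ≤ dist f₁ f₂ := by
        rw [← Real.dist_eq]; exact ContinuousMap.dist_apply_le_dist _
      have h3 : ‖g y * f₁ ⟨y, hyX⟩ - g y * f₂ ⟨y, hyX⟩‖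
          = |g y| * |f₁ ⟨y, hyX⟩ - f₂ ⟨y, hyX⟩| := by
        rw [← mul_sub, Real.norm_eq_abs, abs_mul]
      rw [h3]
      exact mul_le_mul h1 h2 (abs_nonneg _) hM
    calc |∫ y in c..d, (g y * E f₁ y - g y * E f₂ y)|
        ≤ M * dist f₁ f₂ * |d - c| :=
          intervalIntegral.norm_integral_le_of_norm_le_const hb
      _ = M * (d - c) * dist f₁ f₂ := by
          rw [abs_of_nonneg (by linarith : (0:ℝ) ≤ d - c)]; ring
  have hIcont : Continuous I := by
    have := key (fun _ => 1) 1 continuous_const zero_le_one (fun y _ => by simp)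
    simpa [I, E] using this
  have hJcont : Continuous J := by
    refine key id (|c| + |d|) continuous_id (by positivity) ?_
    intro y hy
    rcases abs_le_max_abs_abs hy.1 hy.2 with h
    calc |y| ≤ max |c| |d| := h
      _ ≤ |c| + |d| := max_le (le_add_of_nonneg_right (abs_nonneg _))
          (le_add_of_nonneg_left (abs_nonneg _))
  -- the constraint set inside C(X, ℝ)
  let S₀ : Set C(X, ℝ) := {f | f ⟨c, hcX⟩ = 0 ∧ f ⟨d, hdX⟩ = 0 ∧
    (∀ x₁ x₂ : X, |f x₁ - f x₂| ≤ α * |(x₁ : ℝ) - x₂|) ∧ (∀ x : X, 0 ≤ f x)}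
  let S : Set C(X, ℝ) := S₀ ∩ I ⁻¹' {1}
  -- restriction of a member of K lands in S
  have hrestr : ∀ u ∈ K, ∃ f : C(X, ℝ), f ∈ S ∧ (∀ x : X, f x = u x) := by
    intro u hu
    rw [hK] at hu
    obtain ⟨huc, hud, hLip, hpos, hint⟩ := hu
    have hlip : LipschitzWith α.toNNReal (fun x : X => u x) := by
      apply LipschitzWith.of_dist_le_mul
      intro x₁ x₂
      rw [Real.coe_toNNReal _ hα.le, Real.dist_eq, Subtype.dist_eq, Real.dist_eq]
      exact hLip x₁ x₁.2 x₂ x₂.2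
    refine ⟨⟨fun x : X => u x, hlip.continuous⟩, ⟨⟨huc, hud, ?_, fun x => hpos x x.2⟩, ?_⟩,
      fun x => rfl⟩
    · intro x₁ x₂
      exact hLip x₁ x₁.2 x₂ x₂.2
    · show I _ = 1
      rw [← hint]
      apply intervalIntegral.integral_congr
      intro y hy
      rw [Set.uIcc_of_le hle] at hy
      exact hEmem _ hy
  -- extension of a member of S lands in K
  have hext : ∀ f ∈ S, E f ∈ K := by
    intro f hf
    obtain ⟨⟨h1, h2, h3, h4⟩, h5⟩ := hf
    rw [hK]
    refine ⟨by rw [hEmem f hcX]; exact h1, by rw [hEmem f hdX]; exact h2, ?_, ?_, h5⟩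
    · intro y₁ hy₁ y₂ hy₂
      rw [hEmem f hy₁, hEmem f hy₂]
      exact h3 ⟨y₁, hy₁⟩ ⟨y₂, hy₂⟩
    · intro y hy
      rw [hEmem f hy]
      exact h4 _
  -- S is nonempty
  obtain ⟨u₀, hu₀⟩ := hne
  obtain ⟨f₀, hf₀, -⟩ := hrestr u₀ hu₀
  have hSne : S.Nonempty := ⟨f₀, hf₀⟩
  -- S is compact
  have hS₀comp : IsCompact S₀ := by
    apply ArzelaAscoli.isCompact_of_equicontinuous
    · -- compactness of the image in the product topology
      have himg : ContinuousMap.toFun '' S₀ = {g : X → ℝ | g ⟨c, hcX⟩ = 0 ∧ g ⟨d, hdX⟩ = 0 ∧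
          (∀ x₁ x₂ : X, |g x₁ - g x₂| ≤ α * |(x₁ : ℝ) - x₂|) ∧ ∀ x : X, 0 ≤ g x} := by
        ext g
        constructor
        · rintro ⟨f, hf, rfl⟩; exact hf
        · rintro ⟨h1, h2, h3, h4⟩
          have : LipschitzWith α.toNNReal g := by
            apply LipschitzWith.of_dist_le_mul
            intro x₁ x₂
            rw [Real.coe_toNNReal _ hα.le, Real.dist_eq, Subtype.dist_eq, Real.dist_eq]
            exact h3 x₁ x₂
          exact ⟨⟨g, this.continuous⟩, ⟨h1, h2, h3, h4⟩, rfl⟩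
      rw [himg]
      have hclosed : IsClosed {g : X → ℝ | g ⟨c, hcX⟩ = 0 ∧ g ⟨d, hdX⟩ = 0 ∧
          (∀ x₁ x₂ : X, |g x₁ - g x₂| ≤ α * |(x₁ : ℝ) - x₂|) ∧ ∀ x : X, 0 ≤ g x} := by
        apply IsClosed.inter
        · exact isClosed_eq (continuous_apply _) continuous_const
        apply IsClosed.inter
        · exact isClosed_eq (continuous_apply _) continuous_const
        apply IsClosed.inter
        · show IsClosed {g : X → ℝ | ∀ x₁ x₂ : X, |g x₁ - g x₂| ≤ α * |(x₁ : ℝ) - x₂|}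
          rw [Set.setOf_forall]
          apply isClosed_iInter; intro x₁
          rw [Set.setOf_forall]
          apply isClosed_iInter; intro x₂
          exact isClosed_le ((continuous_apply x₁).sub (continuous_apply x₂)).abs
            continuous_const
        · show IsClosed {g : X → ℝ | ∀ x : X, 0 ≤ g x}
          rw [Set.setOf_forall]
          apply isClosed_iInter; intro x
          exact isClosed_le continuous_const (continuous_apply x)
      apply IsCompact.of_isClosed_subset (isCompact_univ_pi
        (fun _ : X => isCompact_Icc (a := -(α * (d - c))) (b := α * (d - c)))) hclosed
      rintro g ⟨h1, h2, h3, h4⟩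
      intro x _
      have hb : |g x| ≤ α * (d - c) := by
        have := h3 x ⟨c, hcX⟩
        rw [h1, sub_zero] at this
        refine this.trans ?_
        have h5 : |(x : ℝ) - c| ≤ d - c := by
          rw [abs_of_nonneg (by linarith [x.2.1] : (0:ℝ) ≤ (x:ℝ) - c)]
          linarith [x.2.2]
        nlinarith
      exact abs_le.mp hb
    · -- equicontinuity
      apply Metric.equicontinuous_of_continuity_modulus (fun t => α * t)
      · have : Filter.Tendsto (fun t : ℝ => α * t) (nhds 0) (nhds (α * 0)) :=
          Filter.Tendsto.const_mul α Filter.tendsto_id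
        simpa using this
      · rintro x y ⟨f, hf⟩
        rw [Real.dist_eq, Subtype.dist_eq, Real.dist_eq]
        exact hf.2.2.1 x y
  have hScomp : IsCompact S :=
    hS₀comp.inter_right (isClosed_singleton.preimage hIcont)
  -- extract maximizer and minimizer of J on S
  obtain ⟨fplus, hfplusS, hfplusmax⟩ := hScomp.exists_isMaxOn hSne hJcont.continuousOn
  obtain ⟨fminus, hfminusS, hfminusmin⟩ := hScomp.exists_isMinOn hSne hJcont.continuousOn
  refine ⟨E fplus, hext fplus hfplusS, E fminus, hext fminus hfminusS, ?_⟩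
  intro u hu
  obtain ⟨fu, hfuS, hfu⟩ := hrestr u hu
  have hJu : J fu = ∫ y in c..d, y * u y := by
    apply intervalIntegral.integral_congr
    intro y hy
    rw [Set.uIcc_of_le hle] at hy
    show y * E fu y = y * u y
    rw [hEmem fu hy, hfu ⟨y, hy⟩]
  constructor
  · rw [← hJu]; exact hfminusmin hfuS
  · rw [← hJu]; exact hfplusmax hfuS
end

section
/- Let α > 0 and ε > 0. Define h_ε(γ) = γ·exp((γ² − α²)/(2ε)) for γ ∈ ℝ and E_ε(γ) = γ²(α² + 2ε ln γ) for γ > 0, and let h_ε^{-1} and E_ε^{-1} : [0, α²] → [e^{−α²/(2ε)}, 1] denote their inverses. Then for every θ ∈ [−α, α], h_ε^{-1}(θ) = θ / E_ε^{-1}(θ²). -/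
open Set

theorem stmt_6 (α ε : ℝ) (hα : 0 < α) (hε : 0 < ε)
    (h E hinv Einv : ℝ → ℝ)
    (hh : ∀ γ : ℝ, h γ = γ * Real.exp ((γ ^ 2 - α ^ 2) / (2 * ε)))
    (hE : ∀ γ : ℝ, 0 < γ → E γ = γ ^ 2 * (α ^ 2 + 2 * ε * Real.log γ))
    (hinv_left : Function.LeftInverse hinv h)
    (hinv_right : Function.RightInverse hinv h)
    (hEinv_mem : MapsTo Einv (Icc 0 (α ^ 2)) (Icc (Real.exp (-α ^ 2 / (2 * ε))) 1))
    (hEinv_left : ∀ γ ∈ Icc (Real.exp (-α ^ 2 / (2 * ε))) 1, Einv (E γ) = γ)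
    (hEinv_right : ∀ t ∈ Icc (0 : ℝ) (α ^ 2), E (Einv t) = t)
    (θ : ℝ) (hθ : θ ∈ Icc (-α) α) :
    hinv θ = θ / Einv (θ ^ 2) := by
  have hθ2 : θ ^ 2 ∈ Icc (0 : ℝ) (α ^ 2) := by
    constructor
    · positivity
    · nlinarith [hθ.1, hθ.2]
  have hmem := hEinv_mem hθ2
  set l := Einv (θ ^ 2) with hl
  have hlpos : 0 < l := lt_of_lt_of_le (Real.exp_pos _) hmem.1
  have hEl : E l = θ ^ 2 := hEinv_right _ hθ2
  have hEl' : l ^ 2 * (α ^ 2 + 2 * ε * Real.log l) = θ ^ 2 := by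
    rw [← hE l hlpos]; exact hEl
  have key : h (θ / l) = θ := by
    rw [hh]
    have harg : ((θ / l) ^ 2 - α ^ 2) / (2 * ε) = Real.log l := by
      have hl2 : l ^ 2 ≠ 0 := by positivity
      field_simp
      nlinarith [hEl']
    rw [harg, Real.exp_log hlpos]
    field_simp
  calc hinv θ = hinv (h (θ / l)) := by rw [key]
    _ = θ / l := hinv_left _
end

section
/- Let α > 0, ε > 0 and θ ∈ ℝ. Define g(ζ) = −(1/2)·(ε·θ²/ζ + α²·ζ/ε + 2ζ·(ln(ζ/ε) − 1)) for ζ > 0. Then for ζ̄ > 0, the derivative g'(ζ̄) = 0 if and only if θ² = ζ̄²·(2·ln(ζ̄/ε) + α²/ε)/ε; moreover any such critical point ζ̄ is the unique global maximizer of g on (0, ∞). -/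
/-!
The derivative `-(1/2) (-ε θ² / ζ² + α² / ε + 2 log (ζ / ε))` of `g` is strictly decreasing on
`(0, ∞)`, so `g` is strictly concave there and any critical point is its strict global maximum;
clearing denominators in `g' = 0` gives the dual algebraic equation.
-/

open Real Set

noncomputable def gaoStrangIntegrand (α ε θ ζ : ℝ) : ℝ :=
  -(1 / 2) * (ε * θ ^ 2 / ζ + α ^ 2 * ζ / ε + 2 * ζ * (log (ζ / ε) - 1))

theorem StrictConcaveOn.lt_of_deriv_eq_zero {S : Set ℝ} {f : ℝ → ℝ} {x y : ℝ}
    (hf : StrictConcaveOn ℝ S f) (hx : x ∈ S) (hy : y ∈ S) (hyx : y ≠ x)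
    (hd : DifferentiableAt ℝ f x) (h0 : deriv f x = 0) : f y < f x := by
  rcases hyx.lt_or_gt with hlt | hgt
  · have h := hf.deriv_lt_slope hy hx hlt hd
    rw [h0, slope_def_field, lt_div_iff₀ (sub_pos.2 hlt)] at h
    linarith
  · have h := hf.slope_lt_deriv hx hy hgt hd
    rw [h0, slope_def_field, div_lt_iff₀ (sub_pos.2 hgt)] at h
    linarith

section gaoStrangIntegrand

variable {α ε θ ζ : ℝ}

theorem hasDerivAt_gaoStrangIntegrand (hε : ε ≠ 0) (hζ : ζ ≠ 0) :
    HasDerivAt (gaoStrangIntegrand α ε θ)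
      (-(1 / 2) * (-(ε * θ ^ 2 / ζ ^ 2) + α ^ 2 / ε + 2 * log (ζ / ε))) ζ := by
  have hinv : HasDerivAt (fun ζ : ℝ => ε * θ ^ 2 / ζ) (-(ε * θ ^ 2 / ζ ^ 2)) ζ := by
    simpa [div_eq_mul_inv, mul_neg] using (hasDerivAt_inv hζ).const_mul (ε * θ ^ 2)
  have hlin : HasDerivAt (fun ζ : ℝ => α ^ 2 * ζ / ε) (α ^ 2 / ε) ζ := by
    simpa using ((hasDerivAt_id ζ).const_mul (α ^ 2)).div_const ε
  have hlog : HasDerivAt (fun ζ : ℝ => log (ζ / ε)) ζ⁻¹ ζ := by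
    have := (hasDerivAt_log (div_ne_zero hζ hε)).comp ζ ((hasDerivAt_id ζ).div_const ε)
    exact this.congr_deriv (by field_simp)
  have hent : HasDerivAt (fun ζ : ℝ => 2 * ζ * (log (ζ / ε) - 1)) (2 * log (ζ / ε)) ζ := by
    refine (((hasDerivAt_id ζ).const_mul 2).mul (hlog.sub_const 1)).congr_deriv ?_
    simp only [id, mul_one]
    field_simp
    ring
  exact ((hinv.add hlin).add hent).const_mul (-(1 / 2))

theorem deriv_gaoStrangIntegrand_eq_zero_iff (hε : ε ≠ 0) (hζ : ζ ≠ 0) :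
    deriv (gaoStrangIntegrand α ε θ) ζ = 0 ↔
      θ ^ 2 = ζ ^ 2 * (2 * log (ζ / ε) + α ^ 2 / ε) / ε := by
  rw [(hasDerivAt_gaoStrangIntegrand hε hζ).deriv]
  constructor <;> intro h <;> field_simp at h ⊢ <;> linarith

theorem strictConcaveOn_gaoStrangIntegrand (hε : 0 < ε) :
    StrictConcaveOn ℝ (Ioi 0) (gaoStrangIntegrand α ε θ) := by
  refine StrictAntiOn.strictConcaveOn_of_deriv (convex_Ioi 0) (fun ζ hζ =>
    (hasDerivAt_gaoStrangIntegrand hε.ne' (ne_of_gt hζ)).continuousAt.continuousWithinAt) ?_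
  rw [interior_Ioi]
  intro x hx y hy hxy
  rw [(hasDerivAt_gaoStrangIntegrand hε.ne' (ne_of_gt hx)).deriv,
    (hasDerivAt_gaoStrangIntegrand hε.ne' (ne_of_gt hy)).deriv]
  have hx' : (0 : ℝ) < x := hx
  have hinv : ε * θ ^ 2 / y ^ 2 ≤ ε * θ ^ 2 / x ^ 2 := by gcongr
  have hlog : log (x / ε) < log (y / ε) := by gcongr
  linarith

end gaoStrangIntegrand

theorem stmt_13_general (α ε θ : ℝ) (hε : 0 < ε)
    (g : ℝ → ℝ)
    (hg : ∀ ζ : ℝ, g ζ =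
      -(1 / 2) * (ε * θ ^ 2 / ζ + α ^ 2 * ζ / ε + 2 * ζ * (Real.log (ζ / ε) - 1)))
    (ζb : ℝ) (hζb : 0 < ζb) :
    (deriv g ζb = 0 ↔ θ ^ 2 = ζb ^ 2 * (2 * Real.log (ζb / ε) + α ^ 2 / ε) / ε) ∧
    (deriv g ζb = 0 → ∀ ζ : ℝ, 0 < ζ → ζ ≠ ζb → g ζ < g ζb) := by
  obtain rfl : g = gaoStrangIntegrand α ε θ := funext hg
  refine ⟨deriv_gaoStrangIntegrand_eq_zero_iff hε.ne' hζb.ne', fun h0 ζ hζ hne => ?_⟩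
  exact (strictConcaveOn_gaoStrangIntegrand hε).lt_of_deriv_eq_zero hζb hζ hne
    (hasDerivAt_gaoStrangIntegrand hε.ne' hζb.ne').differentiableAt h0

theorem stmt_13 (α ε θ : ℝ) (hα : 0 < α) (hε : 0 < ε)
    (g : ℝ → ℝ)
    (hg : ∀ ζ : ℝ, g ζ =
      -(1 / 2) * (ε * θ ^ 2 / ζ + α ^ 2 * ζ / ε + 2 * ζ * (Real.log (ζ / ε) - 1)))
    (ζb : ℝ) (hζb : 0 < ζb) :
    (deriv g ζb = 0 ↔ θ ^ 2 = ζb ^ 2 * (2 * Real.log (ζb / ε) + α ^ 2 / ε) / ε) ∧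
    (deriv g ζb = 0 → ∀ ζ : ℝ, 0 < ζ → ζ ≠ ζb → g ζ < g ζb) :=
  stmt_13_general α ε θ hε g hg ζb hζb
end

section
/- Let α > 0 and ε > 0. For every λ ∈ [e^{−α²/(2ε)}, 1], one has |λ²·(α² + 2ε·ln λ) − ((α² − 2ε)·λ² + 2ε·λ³)| ≤ ε; that is, writing θ² = E_ε(λ) = λ²(α² + 2ε ln λ), the asymptotic expansion θ² = (α² − 2ε)λ² + 2ελ³ + R_ε(λ) holds with remainder |R_ε(λ)| ≤ ε uniformly on [e^{−α²/(2ε)}, 1]. -/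
theorem stmt_14 (α ε : ℝ) (hα : 0 < α) (hε : 0 < ε) :
    ∀ lam ∈ Set.Icc (Real.exp (-α ^ 2 / (2 * ε))) 1,
      |lam ^ 2 * (α ^ 2 + 2 * ε * Real.log lam) -
          ((α ^ 2 - 2 * ε) * lam ^ 2 + 2 * ε * lam ^ 3)| ≤ ε := by
  intro lam hlam
  have h0 : 0 < lam := lt_of_lt_of_le (Real.exp_pos _) hlam.1
  have h1 : lam ≤ 1 := hlam.2
  have hlog : Real.log lam ≤ lam - 1 := Real.log_le_sub_one_of_pos h0
  have hexp : -2 * Real.log lam + 1 ≤ Real.exp (-2 * Real.log lam) :=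
    Real.add_one_le_exp _
  have h2 : Real.exp (-2 * Real.log lam) = lam⁻¹ ^ 2 := by
    rw [show (-2 : ℝ) * Real.log lam = Real.log (lam⁻¹ ^ 2) by
      rw [Real.log_pow, Real.log_inv]; push_cast; ring]
    exact Real.exp_log (by positivity)
  have hinv : lam ^ 2 * lam⁻¹ ^ 2 = 1 := by field_simp
  have key : lam ^ 2 * (-Real.log lam) ≤ 1 / 2 := by
    rw [h2] at hexp
    nlinarith [sq_nonneg lam, mul_pos h0 h0]
  rw [abs_le]
  constructor
  · nlinarith [mul_nonneg (sq_nonneg lam) (sub_nonneg.2 h1), sq_nonneg lam,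
      mul_pos h0 h0]
  · nlinarith [mul_nonneg (sq_nonneg lam) (sub_nonneg.2 h1),
      mul_nonneg (mul_nonneg hε.le (sq_nonneg lam)) (by linarith : (0:ℝ) ≤ lam - 1 - Real.log lam)]
end

section
/- Let α > 0, ε > 0 and 0 < s < d. Let h_ε^{-1} : ℝ → ℝ denote the inverse of the strictly increasing bijection h_ε(γ) = γ·exp((γ² − α²)/(2ε)). Then there exists a unique constant C ∈ (s²/2, d²/2) such that ∫_s^d h_ε^{-1}(C − t²/2) dt = 0. -/
/-!
The map `h` is strictly increasing (its derivative is `exp (…) * (1 + γ² / ε) > 0`) with `h 0 = 0`,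
so its inverse is a continuous strictly increasing function vanishing at `0`. Hence
`F C = ∫ t in s..d, h⁻¹ (C - t² / 2)` is continuous and strictly increasing in `C`; at `C = s² / 2`
the integrand is negative on `(s, d)` and at `C = d² / 2` it is positive, so `F` has exactly one
zero, which lies in `(s² / 2, d² / 2)`.
-/

open Set intervalIntegral

theorem hasDerivAt_mul_exp_sq_sub_div (α ε x : ℝ) (hε : ε ≠ 0) :
    HasDerivAt (fun γ : ℝ => γ * Real.exp ((γ ^ 2 - α ^ 2) / (2 * ε)))
      (Real.exp ((x ^ 2 - α ^ 2) / (2 * ε)) * (1 + x ^ 2 / ε)) x := by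
  have hexp : HasDerivAt (fun γ : ℝ => Real.exp ((γ ^ 2 - α ^ 2) / (2 * ε)))
      (Real.exp ((x ^ 2 - α ^ 2) / (2 * ε)) * (2 * x / (2 * ε))) x := by
    simpa using (((hasDerivAt_pow 2 x).sub_const (α ^ 2)).div_const (2 * ε)).exp
  exact ((hasDerivAt_id' x).fun_mul hexp).congr_deriv (by field_simp)

theorem strictMono_mul_exp_sq_sub_div (α : ℝ) {ε : ℝ} (hε : 0 < ε) :
    StrictMono fun γ : ℝ => γ * Real.exp ((γ ^ 2 - α ^ 2) / (2 * ε)) :=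
  strictMono_of_deriv_pos fun x => by
    rw [(hasDerivAt_mul_exp_sq_sub_div α ε x hε.ne').deriv]
    positivity

theorem StrictMono.existsUnique_mem_Ioo_eq_zero {F : ℝ → ℝ} (hF : StrictMono F)
    (hFc : Continuous F) {a b : ℝ} (ha : F a < 0) (hb : 0 < F b) :
    ∃! C, C ∈ Ioo a b ∧ F C = 0 := by
  have hab : a ≤ b := (hF.lt_iff_lt.1 (ha.trans hb)).le
  obtain ⟨C, hC, hFC⟩ := intermediate_value_Ioo hab hFc.continuousOn ⟨ha, hb⟩
  exact ⟨C, ⟨hC, hFC⟩, fun C' hC' => hF.injective (hC'.2.trans hFC.symm)⟩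

section ParametricIntegral

variable {f g : ℝ → ℝ} {a b : ℝ}

theorem continuous_intervalIntegral_comp_sub (hf : Continuous f) (hg : Continuous g) :
    Continuous fun C => ∫ t in a..b, f (C - g t) :=
  continuous_parametric_intervalIntegral_of_continuous' (f := fun C t => f (C - g t))
    (hf.comp (continuous_fst.sub (hg.comp continuous_snd))) a b

theorem strictMono_intervalIntegral_comp_sub (hf : StrictMono f) (hfc : Continuous f)
    (hg : Continuous g) (hab : a < b) :
    StrictMono fun C => ∫ t in a..b, f (C - g t) := by
  intro C₁ C₂ hC
  have hcont : ∀ C, ContinuousOn (fun t => f (C - g t)) (Icc a b) := fun C =>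
    (hfc.comp (continuous_const.sub hg)).continuousOn
  exact integral_lt_integral_of_continuousOn_of_le_of_exists_lt hab (hcont C₁) (hcont C₂)
    (fun t _ => (hf (by linarith)).le) ⟨a, left_mem_Icc.2 hab.le, hf (by linarith)⟩

end ParametricIntegral

section HalfSquare

variable {f : ℝ → ℝ} {s d : ℝ}

theorem intervalIntegral_comp_sub_sq_left_neg (hf : StrictMono f) (hfc : Continuous f)
    (hf0 : f 0 = 0) (hs : 0 ≤ s) (hsd : s < d) :
    ∫ t in s..d, f (s ^ 2 / 2 - t ^ 2 / 2) < 0 := by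
  have hpos : 0 < ∫ t in s..d, -f (s ^ 2 / 2 - t ^ 2 / 2) := by
    refine intervalIntegral_pos_of_pos_on
      ((hfc.comp (by fun_prop)).neg.intervalIntegrable s d) (fun t ht => ?_) hsd
    have : s ^ 2 / 2 - t ^ 2 / 2 < 0 := by nlinarith [ht.1]
    simpa [hf0] using hf this
  rw [integral_neg] at hpos
  linarith

theorem intervalIntegral_comp_sub_sq_right_pos (hf : StrictMono f) (hfc : Continuous f)
    (hf0 : f 0 = 0) (hs : 0 ≤ s) (hsd : s < d) :
    0 < ∫ t in s..d, f (d ^ 2 / 2 - t ^ 2 / 2) := by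
  refine intervalIntegral_pos_of_pos_on ((hfc.comp (by fun_prop)).intervalIntegrable s d)
    (fun t ht => ?_) hsd
  have : 0 < d ^ 2 / 2 - t ^ 2 / 2 := by nlinarith [ht.1, ht.2]
  simpa [hf0] using hf this

theorem existsUnique_intervalIntegral_comp_sub_sq_eq_zero (hf : StrictMono f)
    (hfc : Continuous f) (hf0 : f 0 = 0) (hs : 0 ≤ s) (hsd : s < d) :
    ∃! C, C ∈ Ioo (s ^ 2 / 2) (d ^ 2 / 2) ∧ ∫ t in s..d, f (C - t ^ 2 / 2) = 0 :=
  (strictMono_intervalIntegral_comp_sub hf hfc (by fun_prop) hsd).existsUnique_mem_Ioo_eq_zero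
    (continuous_intervalIntegral_comp_sub hfc (by fun_prop))
    (intervalIntegral_comp_sub_sq_left_neg hf hfc hf0 hs hsd)
    (intervalIntegral_comp_sub_sq_right_pos hf hfc hf0 hs hsd)

end HalfSquare

theorem stmt_15_general (α ε s d : ℝ) (hε : 0 < ε) (hs : 0 < s) (hsd : s < d)
    (h hinv : ℝ → ℝ)
    (hh : ∀ γ : ℝ, h γ = γ * Real.exp ((γ ^ 2 - α ^ 2) / (2 * ε)))
    (hinv_right : Function.RightInverse hinv h) :
    ∃! C : ℝ, C ∈ Set.Ioo (s ^ 2 / 2) (d ^ 2 / 2) ∧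
      (∫ t in s..d, hinv (C - t ^ 2 / 2)) = 0 := by
  have hmono : StrictMono h := by
    simpa only [funext hh] using strictMono_mul_exp_sq_sub_div α hε
  let e := hmono.orderIsoOfRightInverse h hinv hinv_right
  have hinv0 : hinv 0 = 0 := hmono.injective (by rw [hinv_right, hh]; simp)
  exact existsUnique_intervalIntegral_comp_sub_sq_eq_zero e.symm.strictMono e.symm.continuous
    hinv0 hs.le hsd

theorem stmt_15 (α ε s d : ℝ) (hα : 0 < α) (hε : 0 < ε) (hs : 0 < s) (hsd : s < d)
    (h hinv : ℝ → ℝ)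
    (hh : ∀ γ : ℝ, h γ = γ * Real.exp ((γ ^ 2 - α ^ 2) / (2 * ε)))
    (hinv_left : Function.LeftInverse hinv h)
    (hinv_right : Function.RightInverse hinv h) :
    ∃! C : ℝ, C ∈ Set.Ioo (s ^ 2 / 2) (d ^ 2 / 2) ∧
      (∫ t in s..d, hinv (C - t ^ 2 / 2)) = 0 :=
  stmt_15_general α ε s d hε hs hsd h hinv hh hinv_right
end

section
/- Let α > 0, ε > 0 and 0 < s < d, let h_ε^{-1} : ℝ → ℝ be the inverse of h_ε(γ) = γ·exp((γ² − α²)/(2ε)), and let C ∈ (s²/2, d²/2) satisfy ∫_s^d h_ε^{-1}(C − t²/2) dt = 0. Define u(y) = ∫_s^y h_ε^{-1}(C − t²/2) dt for y ∈ [s, d]. Then u(s) = u(d) = 0, u(y) > 0 for every y ∈ (s, d), u is strictly concave on [s, d], and u is differentiable with h_ε(u'(y)) = C − y²/2 for all y ∈ [s, d]; in particular u solves the Euler–Lagrange equation (e^{(u'(y)² − α²)/(2ε)}·u'(y))' + y = 0 on [s, d]. -/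
/-!
The integrand `t ↦ h⁻¹(C - t²/2)` is continuous and, since `h` is a strictly increasing bijection
of `ℝ` (its derivative is `exp(…)(1 + γ²/ε) > 0`), strictly decreasing in `t > 0`. Hence its
primitive `u` is strictly concave on `[s, d]`; as `u` vanishes at both ends it is positive in
between. Finally `h(u') = C - y²/2` by construction, and differentiating this identity gives the
Euler–Lagrange equation.
-/

open Set

noncomputable def mulExpSq (α ε γ : ℝ) : ℝ :=
  γ * Real.exp ((γ ^ 2 - α ^ 2) / (2 * ε))

theorem hasDerivAt_mulExpSq (α ε γ : ℝ) :
    HasDerivAt (mulExpSq α ε) (Real.exp ((γ ^ 2 - α ^ 2) / (2 * ε)) * (1 + γ ^ 2 / ε)) γ := by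
  have hexp : HasDerivAt (fun x : ℝ => Real.exp ((x ^ 2 - α ^ 2) / (2 * ε)))
      (Real.exp ((γ ^ 2 - α ^ 2) / (2 * ε)) * (2 * γ / (2 * ε))) γ := by
    simpa using (((hasDerivAt_pow 2 γ).sub_const (α ^ 2)).div_const (2 * ε)).exp
  refine ((hasDerivAt_id γ).mul hexp).congr_deriv ?_
  simp only [id]
  field_simp

theorem strictMono_mulExpSq (α : ℝ) {ε : ℝ} (hε : 0 ≤ ε) : StrictMono (mulExpSq α ε) :=
  strictMono_of_hasDerivAt_pos (hasDerivAt_mulExpSq α ε) fun _ => by positivity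

section RightInverse

variable {α β : Type*} [LinearOrder α] [LinearOrder β] {f : α → β} {g : β → α}

theorem StrictMono.strictMono_of_rightInverse (hf : StrictMono f)
    (hg : Function.RightInverse g f) : StrictMono g :=
  (hf.orderIsoOfRightInverse f g hg).symm.strictMono

theorem StrictMono.continuous_of_rightInverse [TopologicalSpace α] [OrderTopology α]
    [TopologicalSpace β] [OrderTopology β] (hf : StrictMono f)
    (hg : Function.RightInverse g f) : Continuous g :=
  (hf.orderIsoOfRightInverse f g hg).symm.continuous

end RightInverse

theorem strictConcaveOn_integral_of_strictAntiOn {f : ℝ → ℝ} {D : Set ℝ} (a : ℝ)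
    (hf : Continuous f) (hD : Convex ℝ D) (hanti : StrictAntiOn f D) :
    StrictConcaveOn ℝ D fun y => ∫ t in a..y, f t := by
  have hderiv (y : ℝ) : HasDerivAt (fun y => ∫ t in a..y, f t) (f y) y :=
    (hf.integral_hasStrictDerivAt a y).hasDerivAt
  refine StrictAntiOn.strictConcaveOn_of_deriv hD
    (fun y _ => (hderiv y).continuousAt.continuousWithinAt) ?_
  rw [funext fun y => (hderiv y).deriv]
  exact hanti.mono interior_subset

theorem StrictConcaveOn.pos_of_nonneg_endpoints {u : ℝ → ℝ} {a b : ℝ}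
    (hu : StrictConcaveOn ℝ (Icc a b) u) (ha : 0 ≤ u a) (hb : 0 ≤ u b) {y : ℝ}
    (hy : y ∈ Ioo a b) : 0 < u y := by
  have hab : a < b := hy.1.trans hy.2
  have hmin := hu.lt_on_openSegment (left_mem_Icc.mpr hab.le) (right_mem_Icc.mpr hab.le) hab.ne
    (by rwa [openSegment_eq_Ioo hab])
  exact (le_min ha hb).trans_lt hmin

theorem strictAntiOn_sub_sq_div_two (C : ℝ) : StrictAntiOn (fun t : ℝ => C - t ^ 2 / 2) (Ici 0) :=
  fun x hx y _ hxy => by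
    have hsq : x ^ 2 < y ^ 2 := by nlinarith [mem_Ici.mp hx]
    simp only
    linarith

theorem stmt_17_general (α ε s d C : ℝ) (hε : 0 < ε) (hs : 0 < s)
    (h hinv : ℝ → ℝ)
    (hh : ∀ γ : ℝ, h γ = γ * Real.exp ((γ ^ 2 - α ^ 2) / (2 * ε)))
    (hinv_right : Function.RightInverse hinv h)
    (hC0 : (∫ t in s..d, hinv (C - t ^ 2 / 2)) = 0)
    (u : ℝ → ℝ)
    (hu : ∀ y : ℝ, u y = ∫ t in s..y, hinv (C - t ^ 2 / 2)) :
    u s = 0 ∧ u d = 0 ∧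
    (∀ y ∈ Ioo s d, 0 < u y) ∧
    StrictConcaveOn ℝ (Icc s d) u ∧
    (∀ y ∈ Icc s d, HasDerivAt u (hinv (C - y ^ 2 / 2)) y ∧
      h (hinv (C - y ^ 2 / 2)) = C - y ^ 2 / 2) ∧
    (∀ y ∈ Icc s d,
      HasDerivAt (fun z : ℝ =>
        Real.exp ((deriv u z ^ 2 - α ^ 2) / (2 * ε)) * deriv u z) (-y) y) := by
  have hmono : StrictMono h := (funext hh : h = mulExpSq α ε) ▸ strictMono_mulExpSq α hε.le
  set f : ℝ → ℝ := fun t => hinv (C - t ^ 2 / 2)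
  have hf_cont : Continuous f :=
    (hmono.continuous_of_rightInverse hinv_right).comp (by fun_prop)
  have hf_anti : StrictAntiOn f (Icc s d) :=
    ((hmono.strictMono_of_rightInverse hinv_right).comp_strictAntiOn
      (strictAntiOn_sub_sq_div_two C)).mono fun t ht => hs.le.trans ht.1
  have hu_eq : u = fun y => ∫ t in s..y, f t := funext hu
  have hderiv (y : ℝ) : HasDerivAt u (f y) y :=
    hu_eq ▸ (hf_cont.integral_hasStrictDerivAt s y).hasDerivAt
  have hus : u s = 0 := by rw [hu s, intervalIntegral.integral_same]
  have hud : u d = 0 := (hu d).trans hC0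
  have hconc : StrictConcaveOn ℝ (Icc s d) u :=
    hu_eq ▸ strictConcaveOn_integral_of_strictAntiOn s hf_cont (convex_Icc s d) hf_anti
  have hEL : (fun z => Real.exp ((deriv u z ^ 2 - α ^ 2) / (2 * ε)) * deriv u z)
      = fun z => C - z ^ 2 / 2 := by
    funext z
    rw [(hderiv z).deriv, mul_comm, ← hh]
    exact hinv_right _
  refine ⟨hus, hud, fun y hy => hconc.pos_of_nonneg_endpoints hus.ge hud.ge hy, hconc,
    fun y _ => ⟨hderiv y, hinv_right _⟩, fun y _ => hEL ▸ ?_⟩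
  simpa using ((hasDerivAt_pow 2 y).div_const 2).const_sub C

theorem stmt_17 (α ε s d C : ℝ) (hα : 0 < α) (hε : 0 < ε) (hs : 0 < s) (hsd : s < d)
    (h hinv : ℝ → ℝ)
    (hh : ∀ γ : ℝ, h γ = γ * Real.exp ((γ ^ 2 - α ^ 2) / (2 * ε)))
    (hinv_left : Function.LeftInverse hinv h)
    (hinv_right : Function.RightInverse hinv h)
    (hC : C ∈ Ioo (s ^ 2 / 2) (d ^ 2 / 2))
    (hC0 : (∫ t in s..d, hinv (C - t ^ 2 / 2)) = 0)
    (u : ℝ → ℝ)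
    (hu : ∀ y : ℝ, u y = ∫ t in s..y, hinv (C - t ^ 2 / 2)) :
    u s = 0 ∧ u d = 0 ∧
    (∀ y ∈ Ioo s d, 0 < u y) ∧
    StrictConcaveOn ℝ (Icc s d) u ∧
    (∀ y ∈ Icc s d, HasDerivAt u (hinv (C - y ^ 2 / 2)) y ∧
      h (hinv (C - y ^ 2 / 2)) = C - y ^ 2 / 2) ∧
    (∀ y ∈ Icc s d,
      HasDerivAt (fun z : ℝ =>
        Real.exp ((deriv u z ^ 2 - α ^ 2) / (2 * ε)) * deriv u z) (-y) y) :=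
  stmt_17_general α ε s d C hε hs h hinv hh hinv_right hC0 u hu
end
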